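/- The reduced energy objective is convex in the offloaded load: with the notation of the context, define F(S₁) := inf{ e_UL(t_UL, β_UL·S₁) + ε₀·(S_app − S₁) + k_{rx,1}·t_DL + k_{rx,2}·β_DL·S₁ : t_UL > 0, t_DL ≥ 0, β_UL·S₁ ≤ t_UL·R_UL^max, β_DL·S₁ ≤ t_DL·R_DL^max, t_UL + τ₁·S₁ + t_DL ≤ L_max }. Then F is a convex function of S₁ on the set of S₁ ∈ [0, S_app] for which the constraint set is nonempty, and this set is an interval. -/

import Mathlib

open Matrix
open scoped ComplexOrder

/-- Minimum uplink energy: infimum of `k₁ t + k₂ t · Re(Tr Q)` over positive semidefinite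
transmit covariance matrices `Q` sustaining `s` bits in time `t` over channel `H` with
bandwidth `W`. -/
noncomputable def eUL {nF nMT : ℕ} (H : Matrix (Fin nF) (Fin nMT) ℂ)
    (W k1 k2 : ℝ) (t s : ℝ) : ℝ :=
  sInf { e : ℝ | ∃ Q : Matrix (Fin nMT) (Fin nMT) ℂ, Q.PosSemidef ∧
    s ≤ W * t * Real.logb 2 (((1 : Matrix (Fin nF) (Fin nF) ℂ) + H * Q * Hᴴ).det.re) ∧
    e = k1 * t + k2 * t * (Matrix.trace Q).re }

/-- Reduced energy objective: minimal total energy as a function of the offloaded load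
`S₁`, optimized over the uplink and downlink transmission times subject to the rate and
latency constraints. -/
noncomputable def F {nF nMT : ℕ} (H : Matrix (Fin nF) (Fin nMT) ℂ)
    (W k1 k2 Sapp ε₀ τ₁ βUL βDL RUL RDL krx1 krx2 Lmax : ℝ) (S₁ : ℝ) : ℝ :=
  sInf { e : ℝ | ∃ tUL tDL : ℝ, 0 < tUL ∧ 0 ≤ tDL ∧
    βUL * S₁ ≤ tUL * RUL ∧ βDL * S₁ ≤ tDL * RDL ∧ tUL + τ₁ * S₁ + tDL ≤ Lmax ∧
    e = eUL H W k1 k2 tUL (βUL * S₁) + ε₀ * (Sapp - S₁) + krx1 * tDL +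
      krx2 * (βDL * S₁) }

/-- The set of offloaded loads `S₁ ∈ [0, S_app]` for which the constraint set is
nonempty. -/
def Dom (Sapp τ₁ βUL βDL RUL RDL Lmax : ℝ) : Set ℝ :=
  { S₁ : ℝ | 0 ≤ S₁ ∧ S₁ ≤ Sapp ∧ ∃ tUL tDL : ℝ, 0 < tUL ∧ 0 ≤ tDL ∧
    βUL * S₁ ≤ tUL * RUL ∧ βDL * S₁ ≤ tDL * RDL ∧ tUL + τ₁ * S₁ + tDL ≤ Lmax }

/-!
Writing `P = t Q` for the transmitted energy, the rate constraint `s ≤ W t log₂ det (1 + H Q Hᴴ)`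
is the perspective of the concave map `Q ↦ log₂ det (1 + H Q Hᴴ)`; hence mixing two admissible
covariances with weights proportional to `a t_a` and `b t_b` is admissible for the averaged
`(t, s)` at the averaged energy, and `e_UL` is jointly convex. The constraints on
`(S₁, t_UL, t_DL)` are linear and the remaining energy terms affine, so `F` is the partial
infimum of a jointly convex function over a convex set, hence convex.

Concavity of `log det` on positive definite matrices follows by writing `A = Cᴴ C`: congruence
by `C` reduces it to comparing `det (a • 1 + b • M)` with `det M`, which is the concavity of
`log` applied to each eigenvalue of `M`.
-/

open Set

namespace Matrix

variable {m n : Type*}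

theorem convex_setOf_posSemidef : Convex ℝ {A : Matrix n n ℂ | A.PosSemidef} :=
  fun _ hA _ hB _ _ ha hb _ => (hA.smul ha).add (hB.smul hb)

theorem convex_setOf_posDef : Convex ℝ {A : Matrix n n ℂ | A.PosDef} :=
  convex_iff_pairwise_pos.mpr fun _ hA _ hB _ _ _ ha hb _ => (hA.smul ha).add (hB.smul hb)

theorem IsHermitian.det_cfc [Fintype n] [DecidableEq n] {𝕜 : Type*} [RCLike 𝕜]
    {A : Matrix n n 𝕜} (hA : A.IsHermitian) (f : ℝ → ℝ) :
    (cfc f A).det = ∏ i, (f (hA.eigenvalues i) : 𝕜) := by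
  rw [hA.cfc_eq]
  simp [IsHermitian.cfc, -Unitary.conjStarAlgAut_apply]

theorem IsHermitian.im_det [Fintype n] [DecidableEq n] {A : Matrix n n ℂ}
    (hA : A.IsHermitian) : A.det.im = 0 := by
  rw [← Complex.conj_eq_iff_im, ← Complex.star_def, ← det_conjTranspose, hA.eq]

theorem IsHermitian.re_det_mul [Fintype n] [DecidableEq n] {A B : Matrix n n ℂ}
    (hA : A.IsHermitian) (hB : B.IsHermitian) : (A * B).det.re = A.det.re * B.det.re := by
  rw [det_mul, Complex.mul_re, hA.im_det, hB.im_det, mul_zero, sub_zero]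

theorem PosDef.re_det_pos [Fintype n] [DecidableEq n] {A : Matrix n n ℂ} (hA : A.PosDef) :
    0 < A.det.re :=
  (Complex.pos_iff.mp hA.det_pos).1

theorem PosDef.mul_log_re_det_le [Fintype n] [DecidableEq n] {M : Matrix n n ℂ}
    (hM : M.PosDef) {a b : ℝ} (ha : 0 ≤ a) (hb : 0 ≤ b) (hab : a + b = 1) :
    b * Real.log M.det.re ≤ Real.log (a • 1 + b • M).det.re := by
  have hcfc : a • 1 + b • M = cfc (fun x => a + b * x) M := by
    have : IsSelfAdjoint M := hM.isHermitian
    rw [cfc_add .., cfc_const_mul .., cfc_const .., cfc_id' ..]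
    simp [Algebra.algebraMap_eq_smul_one]
  have hμ := hM.eigenvalues_pos
  have hpos : ∀ i, 0 < a + b * hM.isHermitian.eigenvalues i := fun i => by
    simpa using convex_Ioi (0 : ℝ) one_pos (hμ i) ha hb hab
  rw [hcfc, hM.isHermitian.det_cfc, hM.isHermitian.det_eq_prod_eigenvalues]
  simp only [Complex.coe_algebraMap, ← Complex.ofReal_prod, Complex.ofReal_re]
  rw [Real.log_prod fun i _ => (hμ i).ne', Real.log_prod fun i _ => (hpos i).ne',
    Finset.mul_sum]
  refine Finset.sum_le_sum fun i _ => ?_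
  simpa using strictConcaveOn_log_Ioi.concaveOn.2 (mem_Ioi.mpr one_pos) (hμ i) ha hb hab

open scoped MatrixOrder in
theorem concaveOn_log_re_det [Fintype n] [DecidableEq n] :
    ConcaveOn ℝ {A : Matrix n n ℂ | A.PosDef} fun A => Real.log A.det.re := by
  refine ⟨convex_setOf_posDef, fun A hA B hB a b ha hb hab => ?_⟩
  obtain ⟨C, rfl⟩ := CStarAlgebra.nonneg_iff_eq_star_mul_self.mp hA.posSemidef.nonneg
  have hdet : (star C).det * C.det ≠ 0 := by
    rw [← det_mul]
    exact hA.det_pos.ne'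
  have hC : IsUnit C.det := IsUnit.mk0 _ (right_ne_zero_of_mul hdet)
  set M := star C⁻¹ * B * C⁻¹
  have hM : M.PosDef :=
    (IsUnit.posDef_star_left_conjugate_iff (isUnit_nonsing_inv_iff.mpr
      ((isUnit_iff_isUnit_det C).mpr hC))).mpr hB
  have hB' : B = star C * M * C := by
    rw [show star C * M * C = star (C⁻¹ * C) * B * (C⁻¹ * C) by
        simp only [M, star_mul, mul_assoc],
      nonsing_inv_mul _ hC, star_one, one_mul, mul_one]
  have hconj : ∀ X : Matrix n n ℂ, X.PosDef →
      Real.log (star C * X * C).det.re = Real.log (star C * C).det.re + Real.log X.det.re := by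
    intro X hX
    rw [det_mul_right_comm, hA.isHermitian.re_det_mul hX.isHermitian,
      Real.log_mul hA.re_det_pos.ne' hX.re_det_pos.ne']
  have hcomb : a • (star C * C) + b • B = star C * (a • 1 + b • M) * C := by
    rw [hB']
    simp only [mul_add, add_mul, mul_smul_comm, smul_mul_assoc, mul_one]
  have hN : (a • 1 + b • M).PosDef := convex_setOf_posDef PosDef.one hM ha hb hab
  simp only [smul_eq_mul]
  rw [hcomb, hB', hconj _ hM, hconj _ hN]
  linear_combination hM.mul_log_re_det_le ha hb hab + Real.log (star C * C).det.re * hab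

theorem concaveOn_logb_re_det_one_add [Fintype m] [DecidableEq m] [Fintype n]
    (H : Matrix m n ℂ) :
    ConcaveOn ℝ {Q : Matrix n n ℂ | Q.PosSemidef}
      fun Q => Real.logb 2 (1 + H * Q * Hᴴ).det.re := by
  refine ⟨convex_setOf_posSemidef, fun Qa hQa Qb hQb a b ha hb hab => ?_⟩
  have hpd : ∀ Q : Matrix n n ℂ, Q.PosSemidef → (1 + H * Q * Hᴴ).PosDef := fun Q hQ =>
    PosDef.one.add_posSemidef (hQ.mul_mul_conjTranspose_same H)
  have hlin : 1 + H * (a • Qa + b • Qb) * Hᴴ =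
      a • (1 + H * Qa * Hᴴ) + b • (1 + H * Qb * Hᴴ) := by
    obtain rfl : b = 1 - a := by linarith
    simp only [Matrix.mul_add, Matrix.add_mul, Matrix.mul_smul, Matrix.smul_mul]
    module
  have hlog := concaveOn_log_re_det.2 (hpd _ hQa) (hpd _ hQb) ha hb hab
  simp only [smul_eq_mul, Real.logb] at hlog ⊢
  rw [hlin, mul_div_assoc', mul_div_assoc', ← add_div]
  exact div_le_div_of_nonneg_right hlog (Real.log_pos one_lt_two).le

theorem exists_posSemidef_lt_logb_re_det_one_add [Fintype m] [DecidableEq m] [Fintype n]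
    [DecidableEq n] {H : Matrix m n ℂ} (hH : H ≠ 0) (r : ℝ) :
    ∃ Q : Matrix n n ℂ, Q.PosSemidef ∧ r < Real.logb 2 (1 + H * Q * Hᴴ).det.re := by
  obtain ⟨v, hv⟩ : ∃ v, H *ᵥ v ≠ 0 := by
    by_contra! h
    exact hH (Matrix.ext fun i j => by simpa using congrFun (h (Pi.single j 1)) i)
  set u := H *ᵥ v
  have hu : 0 < (star u ⬝ᵥ u).re :=
    (Complex.pos_iff.mp (dotProduct_star_self_pos_iff.mpr hv)).1
  set c := 2 ^ r / (star u ⬝ᵥ u).re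
  refine ⟨c • vecMulVec v (star v), (posSemidef_vecMulVec_self_star v).smul (by positivity), ?_⟩
  -- `H Q Hᴴ = c • u uᴴ` has rank one, so the matrix determinant lemma applies.
  have hdet : (1 + H * (c • vecMulVec v (star v)) * Hᴴ).det = 1 + c * (star u ⬝ᵥ u) := by
    rw [Matrix.mul_smul, Matrix.smul_mul, mul_vecMulVec, vecMulVec_mul, ← star_mulVec,
      ← smul_vecMulVec, vecMulVec_eq Unit, det_one_add_replicateCol_mul_replicateRow,
      dotProduct_smul, Complex.real_smul]
  have h2r : (0 : ℝ) < 2 ^ r := by positivity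
  rw [hdet, Complex.add_re, Complex.one_re, Complex.re_ofReal_mul, div_mul_cancel₀ _ hu.ne']
  calc r = Real.logb 2 (2 ^ r) := (Real.logb_rpow two_pos one_lt_two.ne').symm
    _ < Real.logb 2 (1 + 2 ^ r) := Real.logb_lt_logb one_lt_two h2r (by linarith)

end Matrix

theorem ConcaveOn.mul_add_mul_le {E : Type*} [AddCommMonoid E] [Module ℝ E] {s : Set E}
    {f : E → ℝ} (hf : ConcaveOn ℝ s f) {x y : E} (hx : x ∈ s) (hy : y ∈ s) {p q : ℝ}
    (hp : 0 ≤ p) (hq : 0 ≤ q) (hpq : 0 < p + q) :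
    p * f x + q * f y ≤ (p + q) * f ((p / (p + q)) • x + (q / (p + q)) • y) := by
  have h := hf.2 hx hy (div_nonneg hp hpq.le) (div_nonneg hq hpq.le)
    (by rw [← add_div, div_self hpq.ne'])
  calc p * f x + q * f y = (p + q) * ((p / (p + q)) • f x + (q / (p + q)) • f y) := by
        simp only [smul_eq_mul]
        field_simp
    _ ≤ _ := mul_le_mul_of_nonneg_left h hpq.le

theorem le_mul_csInf_add_mul_csInf {A B : Set ℝ} {a b c : ℝ} (hA : A.Nonempty)
    (hB : B.Nonempty) (ha : 0 < a) (hb : 0 < b) (h : ∀ u ∈ A, ∀ v ∈ B, c ≤ a * u + b * v) :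
    c ≤ a * sInf A + b * sInf B := by
  have hinfB : ∀ u ∈ A, c ≤ a * u + b * sInf B := fun u hu => by
    have : (c - a * u) / b ≤ sInf B :=
      le_csInf hB fun v hv => by rw [div_le_iff₀ hb]; linarith [h u hu v hv]
    rw [div_le_iff₀ hb] at this
    linarith
  have : (c - b * sInf B) / a ≤ sInf A :=
    le_csInf hA fun u hu => by rw [div_le_iff₀ ha]; linarith [hinfB u hu]
  rw [div_le_iff₀ ha] at this
  linarith

theorem convexOn_csInf {E : Type*} [AddCommMonoid E] [Module ℝ E] {s : Set E}
    {A : E → Set ℝ} (hs : Convex ℝ s) (hne : ∀ x ∈ s, (A x).Nonempty)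
    (hbdd : ∀ x ∈ s, BddBelow (A x))
    (hcomb : ∀ x ∈ s, ∀ y ∈ s, ∀ ⦃a b : ℝ⦄, 0 < a → 0 < b → a + b = 1 →
      ∀ u ∈ A x, ∀ v ∈ A y, ∃ w ∈ A (a • x + b • y), w ≤ a * u + b * v) :
    ConvexOn ℝ s fun x => sInf (A x) := by
  refine convexOn_iff_pairwise_pos.mpr ⟨hs, fun x hx y hy _ a b ha hb hab => ?_⟩
  refine le_mul_csInf_add_mul_csInf (hne x hx) (hne y hy) ha hb fun u hu v hv => ?_
  obtain ⟨w, hw, hwle⟩ := hcomb x hx y hy ha hb hab u hu v hv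
  exact (csInf_le (hbdd _ (hs hx hy ha.le hb.le hab)) hw).trans hwle

section Uplink

variable {nF nMT : ℕ} (H : Matrix (Fin nF) (Fin nMT) ℂ) {W k1 k2 t s : ℝ}

def uplinkEnergies (W k1 k2 t s : ℝ) : Set ℝ :=
  { e : ℝ | ∃ Q : Matrix (Fin nMT) (Fin nMT) ℂ, Q.PosSemidef ∧
    s ≤ W * t * Real.logb 2 (((1 : Matrix (Fin nF) (Fin nF) ℂ) + H * Q * Hᴴ).det.re) ∧
    e = k1 * t + k2 * t * (Matrix.trace Q).re }

theorem eUL_eq_sInf_uplinkEnergies : eUL H W k1 k2 t s = sInf (uplinkEnergies H W k1 k2 t s) :=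
  rfl

variable {H}

theorem mul_le_of_mem_uplinkEnergies (hk2 : 0 ≤ k2) (ht : 0 ≤ t) {e : ℝ}
    (he : e ∈ uplinkEnergies H W k1 k2 t s) : k1 * t ≤ e := by
  obtain ⟨Q, hQ, -, rfl⟩ := he
  exact le_add_of_nonneg_right
    (mul_nonneg (mul_nonneg hk2 ht) (Complex.nonneg_iff.mp hQ.trace_nonneg).1)

theorem bddBelow_uplinkEnergies (hk2 : 0 ≤ k2) (ht : 0 ≤ t) :
    BddBelow (uplinkEnergies H W k1 k2 t s) :=
  ⟨k1 * t, fun _ => mul_le_of_mem_uplinkEnergies hk2 ht⟩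

theorem eUL_nonneg (hk1 : 0 ≤ k1) (hk2 : 0 ≤ k2) (ht : 0 ≤ t) : 0 ≤ eUL H W k1 k2 t s :=
  Real.sInf_nonneg fun _ he => (mul_nonneg hk1 ht).trans (mul_le_of_mem_uplinkEnergies hk2 ht he)

theorem eUL_of_nonpos (hk2 : 0 ≤ k2) (ht : 0 ≤ t) (hs : s ≤ 0) :
    eUL H W k1 k2 t s = k1 * t := by
  have hzero : k1 * t ∈ uplinkEnergies H W k1 k2 t s :=
    ⟨0, PosSemidef.zero, by simpa using hs, by simp⟩
  exact le_antisymm (csInf_le (bddBelow_uplinkEnergies hk2 ht) hzero)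
    (le_csInf ⟨_, hzero⟩ fun _ => mul_le_of_mem_uplinkEnergies hk2 ht)

/-- No positive rate is achievable over the zero channel, so `eUL` takes the junk value
`sInf ∅ = 0` there. -/
theorem eUL_zero_of_pos (hs : 0 < s) :
    eUL (0 : Matrix (Fin nF) (Fin nMT) ℂ) W k1 k2 t s = 0 := by
  rw [eUL_eq_sInf_uplinkEnergies, ← Real.sInf_empty]
  congr 1
  refine Set.eq_empty_iff_forall_notMem.mpr fun e ⟨Q, _, hrate, _⟩ => ?_
  simp only [Matrix.zero_mul, add_zero, det_one, Complex.one_re, Real.logb_one,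
    mul_zero] at hrate
  linarith

theorem convexOn_eUL_zero (hk1 : 0 ≤ k1) (hk2 : 0 ≤ k2) :
    ConvexOn ℝ (Ioi 0 ×ˢ Ici 0) fun p : ℝ × ℝ =>
      eUL (0 : Matrix (Fin nF) (Fin nMT) ℂ) W k1 k2 p.1 p.2 := by
  refine convexOn_iff_pairwise_pos.mpr ⟨(convex_Ioi 0).prod (convex_Ici 0),
    fun x hx y hy _ a b ha hb hab => ?_⟩
  obtain ⟨hx1, hx2⟩ := hx
  obtain ⟨hy1, hy2⟩ := hy
  simp only [mem_Ioi, mem_Ici] at hx1 hx2 hy1 hy2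
  simp only [Prod.fst_add, Prod.snd_add, Prod.smul_fst, Prod.smul_snd, smul_eq_mul]
  rcases (add_nonneg (mul_nonneg ha.le hx2) (mul_nonneg hb.le hy2)).eq_or_lt with hs | hs
  · obtain ⟨hax, hby⟩ :=
      (add_eq_zero_iff_of_nonneg (mul_nonneg ha.le hx2) (mul_nonneg hb.le hy2)).mp hs.symm
    rw [eUL_of_nonpos hk2 (add_pos (mul_pos ha hx1) (mul_pos hb hy1)).le hs.symm.le,
      eUL_of_nonpos hk2 hx1.le ((mul_eq_zero.mp hax).resolve_left ha.ne').le,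
      eUL_of_nonpos hk2 hy1.le ((mul_eq_zero.mp hby).resolve_left hb.ne').le]
    exact le_of_eq (by ring)
  · rw [eUL_zero_of_pos hs]
    exact add_nonneg (mul_nonneg ha.le (eUL_nonneg hk1 hk2 hx1.le))
      (mul_nonneg hb.le (eUL_nonneg hk1 hk2 hy1.le))

theorem mul_add_mul_mem_uplinkEnergies (hW : 0 ≤ W) {ta tb sa sb ea eb a b : ℝ}
    (hta : 0 < ta) (htb : 0 < tb) (ha : 0 ≤ a) (hb : 0 ≤ b) (hab : a + b = 1)
    (hea : ea ∈ uplinkEnergies H W k1 k2 ta sa) (heb : eb ∈ uplinkEnergies H W k1 k2 tb sb) :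
    a * ea + b * eb ∈ uplinkEnergies H W k1 k2 (a * ta + b * tb) (a * sa + b * sb) := by
  obtain ⟨Qa, hQa, hsa, rfl⟩ := hea
  obtain ⟨Qb, hQb, hsb, rfl⟩ := heb
  have htc : 0 < a * ta + b * tb := by
    simpa using convex_Ioi (0 : ℝ) hta htb ha hb hab
  have hrate := (concaveOn_logb_re_det_one_add H).mul_add_mul_le hQa hQb
    (mul_nonneg ha hta.le) (mul_nonneg hb htb.le) htc
  refine ⟨(a * ta / (a * ta + b * tb)) • Qa + (b * tb / (a * ta + b * tb)) • Qb,
    convex_setOf_posSemidef hQa hQb (by positivity) (by positivity)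
      (by rw [← add_div, div_self htc.ne']), ?_, ?_⟩
  · linarith [mul_le_mul_of_nonneg_left hsa ha, mul_le_mul_of_nonneg_left hsb hb,
      mul_le_mul_of_nonneg_left hrate hW]
  · simp only [trace_add, trace_smul, Complex.add_re, Complex.smul_re, smul_eq_mul]
    field_simp
    ring

theorem convexOn_eUL (hW : 0 < W) (hk1 : 0 ≤ k1) (hk2 : 0 ≤ k2) :
    ConvexOn ℝ (Ioi 0 ×ˢ Ici 0) fun p : ℝ × ℝ => eUL H W k1 k2 p.1 p.2 := by
  rcases eq_or_ne H 0 with rfl | hH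
  · exact convexOn_eUL_zero hk1 hk2
  refine convexOn_csInf ((convex_Ioi 0).prod (convex_Ici 0)) (fun x hx => ?_)
    (fun x hx => bddBelow_uplinkEnergies hk2 hx.1.le)
    fun x hx y hy a b ha hb hab u hu v hv => ?_
  · obtain ⟨Q, hQ, hrate⟩ := exists_posSemidef_lt_logb_re_det_one_add hH (x.2 / (W * x.1))
    rw [div_lt_iff₀' (mul_pos hW hx.1)] at hrate
    exact ⟨_, Q, hQ, hrate.le, rfl⟩
  · exact ⟨_, mul_add_mul_mem_uplinkEnergies hW.le hx.1 hy.1 ha.le hb.le hab hu hv, le_rfl⟩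

end Uplink

section Reduced

variable {nF nMT : ℕ} (H : Matrix (Fin nF) (Fin nMT) ℂ)
  {W k1 k2 Sapp ε₀ τ₁ βUL βDL RUL RDL krx1 krx2 Lmax : ℝ}

def feasibleSet (τ₁ βUL βDL RUL RDL Lmax : ℝ) : Set (ℝ × ℝ × ℝ) :=
  {(S₁, tUL, tDL) | 0 < tUL ∧ 0 ≤ tDL ∧
    βUL * S₁ ≤ tUL * RUL ∧ βDL * S₁ ≤ tDL * RDL ∧ tUL + τ₁ * S₁ + tDL ≤ Lmax}

theorem convex_feasibleSet : Convex ℝ (feasibleSet τ₁ βUL βDL RUL RDL Lmax) := by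
  rintro ⟨S, t, d⟩ ⟨ht, hd, hU, hD, hL⟩ ⟨S', t', d'⟩ ⟨ht', hd', hU', hD', hL'⟩ a b ha hb hab
  simp only [Prod.smul_mk, Prod.mk_add_mk, smul_eq_mul]
  obtain rfl : b = 1 - a := by linarith
  refine ⟨by simpa using convex_Ioi (0 : ℝ) ht ht' ha hb (by ring), by positivity, ?_, ?_, ?_⟩
  · linarith [mul_le_mul_of_nonneg_left hU ha, mul_le_mul_of_nonneg_left hU' hb]
  · linarith [mul_le_mul_of_nonneg_left hD ha, mul_le_mul_of_nonneg_left hD' hb]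
  · linarith [mul_le_mul_of_nonneg_left hL ha, mul_le_mul_of_nonneg_left hL' hb]

theorem convex_Dom : Convex ℝ (Dom Sapp τ₁ βUL βDL RUL RDL Lmax) := by
  rintro x ⟨hx0, hxS, tx, dx, hx⟩ y ⟨hy0, hyS, ty, dy, hy⟩ a b ha hb hab
  obtain ⟨h0, hS⟩ := convex_Icc 0 Sapp ⟨hx0, hxS⟩ ⟨hy0, hyS⟩ ha hb hab
  exact ⟨h0, hS, _, _, convex_feasibleSet (x := (x, tx, dx)) hx (y := (y, ty, dy)) hy ha hb hab⟩

def totalEnergies (W k1 k2 Sapp ε₀ τ₁ βUL βDL RUL RDL krx1 krx2 Lmax S₁ : ℝ) : Set ℝ :=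
  { e : ℝ | ∃ tUL tDL : ℝ, 0 < tUL ∧ 0 ≤ tDL ∧
    βUL * S₁ ≤ tUL * RUL ∧ βDL * S₁ ≤ tDL * RDL ∧ tUL + τ₁ * S₁ + tDL ≤ Lmax ∧
    e = eUL H W k1 k2 tUL (βUL * S₁) + ε₀ * (Sapp - S₁) + krx1 * tDL +
      krx2 * (βDL * S₁) }

theorem bddBelow_totalEnergies (hk1 : 0 ≤ k1) (hk2 : 0 ≤ k2) (hkrx1 : 0 ≤ krx1) (S₁ : ℝ) :
    BddBelow (totalEnergies H W k1 k2 Sapp ε₀ τ₁ βUL βDL RUL RDL krx1 krx2 Lmax S₁) := by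
  refine ⟨ε₀ * (Sapp - S₁) + krx2 * (βDL * S₁), ?_⟩
  rintro _ ⟨tUL, tDL, htUL, htDL, -, -, -, rfl⟩
  linarith [eUL_nonneg (H := H) (W := W) (s := βUL * S₁) hk1 hk2 htUL.le,
    mul_nonneg hkrx1 htDL]

theorem convexOn_F (hW : 0 < W) (hk1 : 0 ≤ k1) (hk2 : 0 ≤ k2) (hβUL : 0 ≤ βUL)
    (hkrx1 : 0 ≤ krx1) :
    ConvexOn ℝ (Dom Sapp τ₁ βUL βDL RUL RDL Lmax)
      (F H W k1 k2 Sapp ε₀ τ₁ βUL βDL RUL RDL krx1 krx2 Lmax) := by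
  refine convexOn_csInf
    (A := totalEnergies H W k1 k2 Sapp ε₀ τ₁ βUL βDL RUL RDL krx1 krx2 Lmax) convex_Dom
    (fun x ⟨_, _, t, d, ht, hd, hU, hD, hL⟩ => ⟨_, t, d, ht, hd, hU, hD, hL, rfl⟩)
    (fun x _ => bddBelow_totalEnergies H hk1 hk2 hkrx1 x) ?_
  rintro x ⟨hx, -⟩ y ⟨hy, -⟩ a b ha hb hab _ ⟨tx, dx, htx, hdx, hxU, hxD, hxL, rfl⟩
    _ ⟨ty, dy, hty, hdy, hyU, hyD, hyL, rfl⟩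
  obtain ⟨ht, hd, hU, hD, hL⟩ := convex_feasibleSet (x := (x, tx, dx))
    ⟨htx, hdx, hxU, hxD, hxL⟩ (y := (y, ty, dy)) ⟨hty, hdy, hyU, hyD, hyL⟩ ha.le hb.le hab
  have hUL := (convexOn_eUL (H := H) hW hk1 hk2).2 (x := (tx, βUL * x)) (y := (ty, βUL * y))
    ⟨htx, mul_nonneg hβUL hx⟩ ⟨hty, mul_nonneg hβUL hy⟩ ha.le hb.le hab
  refine ⟨_, ⟨_, _, ht, hd, hU, hD, hL, rfl⟩, ?_⟩
  simp only [Prod.smul_mk, Prod.mk_add_mk, smul_eq_mul] at hUL ⊢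
  rw [show βUL * (a * x + b * y) = a * (βUL * x) + b * (βUL * y) by ring]
  linear_combination hUL - ε₀ * Sapp * hab

end Reduced

theorem reduced_objective_convex_general
    (nF nMT : ℕ) (H : Matrix (Fin nF) (Fin nMT) ℂ)
    (W k1 k2 Sapp ε₀ τ₁ βUL βDL RUL RDL krx1 krx2 Lmax : ℝ)
    (hW : 0 < W) (hk1 : 0 ≤ k1) (hk2 : 0 < k2)
    (hβUL : 1 ≤ βUL)
    (hkrx1 : 0 ≤ krx1) :
    ConvexOn ℝ (Dom Sapp τ₁ βUL βDL RUL RDL Lmax)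
      (F H W k1 k2 Sapp ε₀ τ₁ βUL βDL RUL RDL krx1 krx2 Lmax) ∧
    Convex ℝ (Dom Sapp τ₁ βUL βDL RUL RDL Lmax) :=
  ⟨convexOn_F H hW hk1 hk2.le (zero_le_one.trans hβUL) hkrx1, convex_Dom⟩

/-- The reduced energy objective `F` is convex on the set of feasible offloaded loads,
and this set is an interval (a convex subset of `ℝ`). -/
theorem reduced_objective_convex
    (nF nMT : ℕ) (H : Matrix (Fin nF) (Fin nMT) ℂ)
    (W k1 k2 Sapp ε₀ τ₁ βUL βDL RUL RDL krx1 krx2 Lmax : ℝ)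
    (hW : 0 < W) (hk1 : 0 ≤ k1) (hk2 : 0 < k2)
    (hSapp : 0 < Sapp) (hε₀ : 0 < ε₀) (hτ₁ : 0 < τ₁)
    (hβUL : 1 ≤ βUL) (hβDL : 0 < βDL) (hRUL : 0 < RUL) (hRDL : 0 < RDL)
    (hkrx1 : 0 ≤ krx1) (hkrx2 : 0 ≤ krx2) (hLmax : 0 < Lmax) :
    ConvexOn ℝ (Dom Sapp τ₁ βUL βDL RUL RDL Lmax)
      (F H W k1 k2 Sapp ε₀ τ₁ βUL βDL RUL RDL krx1 krx2 Lmax) ∧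
    Convex ℝ (Dom Sapp τ₁ βUL βDL RUL RDL Lmax) :=
  reduced_objective_convex_general nF nMT H W k1 k2 Sapp ε₀ τ₁ βUL βDL RUL RDL krx1 krx2 Lmax hW hk1
    hk2 hβUL hkrx1
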